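/- Let p be an odd prime, k ≥ 2, q = p^k, and let a, b ∈ (ℤ/qℤ)^*. If χ is a multiplicative character of (ℤ/qℤ)^* whose parameter t_χ satisfies t_χ² ≢ −4ab (mod p), then |K_q(a,b,χ)| ≤ 2√q. -/

import Mathlib

open Complex Finset

/-- The standard additive character `e_q(x) = exp(2πix/q)` of `ℤ/qℤ`. -/
noncomputable def eZMod (q : ℕ) (x : ZMod q) : ℂ :=
  Complex.exp (2 * Real.pi * Complex.I * x.val / q)

/-- The twisted Kloosterman sum `K_q(a,b,χ) = ∑_{x ∈ (ℤ/qℤ)^*} e_q(ax + bx⁻¹)χ(x)`. -/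
noncomputable def Kloos (q : ℕ) [NeZero q] (a b : ZMod q) (χ : MulChar (ZMod q) ℂ) : ℂ :=
  ∑ x : (ZMod q)ˣ,
    eZMod q (a * (x : ZMod q) + b * ((x⁻¹ : (ZMod q)ˣ) : ZMod q)) * χ (x : ZMod q)

/-!
Stationary phase. For `2l ≤ k ≤ 3l` (here `l = ⌊k/2⌋`) the truncated exponential
`E(y) = 1 + p^l y + p^{2l} y²/2` is a homomorphism `ℤ/p^{k-l} → (ℤ/p^k)^*`, on which `χ` is
`y ↦ e_{p^{k-l}}(t y)`. Averaging over the substitutions `x ↦ x E(y)` gives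
`p^{k-l} K = ∑_x e_q(ax + bx⁻¹) χ(x) S_x` with
`S_x = ∑_y e_{p^{k-l}}((ax - bx⁻¹ + t) y) e_{p^{k-2l}}((ax + bx⁻¹) y²/2)`.
`S_x` vanishes unless `ax - bx⁻¹ + t ≡ 0 (mod p^l)`, i.e. unless `x mod p^l` is a root of
`a z² + t z - b`. For such `x`, `(ax + bx⁻¹)² ≡ t² + 4ab ≢ 0 (mod p)`, so `S_x` is `p^l` times a
nondegenerate quadratic Gauss sum modulo `p^{k-2l}` and `|S_x| = p^l √(p^{k-2l}) = √q`. Since the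
discriminant `t² + 4ab` is a unit mod `p`, there are at most two such roots modulo `p^l`, each
lifting to `p^{k-l}` residues modulo `q`; hence `|K| ≤ 2√q`.
-/

lemma eZMod_eq_stdAddChar (N : ℕ) [NeZero N] (x : ZMod N) : eZMod N x = ZMod.stdAddChar x := by
  rw [ZMod.stdAddChar_apply, ZMod.toCircle_apply, eZMod]

lemma eZMod_add (N : ℕ) [NeZero N] (x y : ZMod N) : eZMod N (x + y) = eZMod N x * eZMod N y := by
  simp only [eZMod_eq_stdAddChar, AddChar.map_add_eq_mul]

lemma norm_eZMod (N : ℕ) [NeZero N] (x : ZMod N) : ‖eZMod N x‖ = 1 := by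
  rw [eZMod_eq_stdAddChar, AddChar.norm_apply]

lemma eZMod_natCast_mul {d e N : ℕ} [NeZero N] (hN : d * e = N) (w : ZMod N) :
    eZMod N (d * w) = eZMod e (ZMod.cast w) := by
  have : NeZero e := ⟨right_ne_zero_of_mul (hN ▸ NeZero.ne N)⟩
  have hd : (d : ℂ) ≠ 0 := Nat.cast_ne_zero.2 (left_ne_zero_of_mul (hN ▸ NeZero.ne N))
  have hNC : (N : ℂ) = d * e := by rw [← hN, Nat.cast_mul]
  rw [← ZMod.natCast_zmod_val w, ZMod.cast_natCast (Dvd.intro_left d hN), ← Nat.cast_mul,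
    eZMod_eq_stdAddChar, eZMod_eq_stdAddChar, ZMod.stdAddChar_apply, ZMod.stdAddChar_apply,
    ZMod.toCircle_natCast, ZMod.toCircle_natCast, hNC]
  congr 1
  push_cast
  field_simp

lemma sum_comp_cast {M : Type*} [AddCommMonoid M] {d N : ℕ} [NeZero d] [NeZero N] (h : d ∣ N)
    (g : ZMod d → M) : ∑ y : ZMod N, g (ZMod.cast y) = (N / d) • ∑ u, g u := by
  classical
  set π := ZMod.castHom h (ZMod d)
  have hconst (u : ZMod d) : #{y | π y = u} = #{y | π y = 0} :=
    AddMonoidHom.card_fiber_eq_of_mem_range π.toAddMonoidHom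
      (ZMod.castHom_surjective h u) (ZMod.castHom_surjective h 0)
  have hfiber (u : ZMod d) : #{y | π y = u} = N / d := by
    have htotal := card_eq_sum_card_fiberwise (s := univ) (t := univ) (f := π)
      fun _ _ => mem_univ _
    simp only [card_univ, ZMod.card, hconst, sum_const, smul_eq_mul] at htotal
    rw [hconst, Nat.div_eq_of_eq_mul_right (Nat.pos_of_neZero d) htotal]
  change ∑ y, g (π y) = _
  calc ∑ y, g (π y) = ∑ u, ∑ y with π y = u, g (π y) := (sum_fiberwise _ _ _).symm
    _ = ∑ u, #{y | π y = u} • g u :=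
      sum_congr rfl fun u _ => by
        rw [sum_congr rfl fun y hy => by rw [(mem_filter.1 hy).2], sum_const]
    _ = (N / d) • ∑ u, g u := by simp_rw [hfiber, smul_sum]

lemma card_filter_cast_mem {d N : ℕ} [NeZero d] [NeZero N] (h : d ∣ N) (s : Finset (ZMod d)) :
    #{x : ZMod N | ZMod.cast x ∈ s} = N / d * #s := by
  classical
  rw [card_eq_sum_ones, sum_filter, sum_comp_cast h fun u => if u ∈ s then 1 else 0, sum_boole,
    filter_mem_eq_inter, univ_inter, smul_eq_mul, Nat.cast_id]

lemma card_units_filter_cast_mem_le {d N : ℕ} [NeZero d] [NeZero N] (h : d ∣ N)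
    (s : Finset (ZMod d)) : #{x : (ZMod N)ˣ | ZMod.cast (x : ZMod N) ∈ s} ≤ N / d * #s :=
  card_filter_cast_mem h s ▸ card_le_card_of_injOn Units.val (fun x hx => by simpa using hx)
    Units.val_injective.injOn

lemma norm_sum_addChar_quadratic {R : Type*} [CommRing R] [Fintype R] {ψ : AddChar R ℂ}
    (hψ : ψ.IsPrimitive) {α : R} (hα : IsUnit (2 * α)) (β : R) :
    ‖∑ u, ψ (α * u ^ 2 + β * u)‖ = √(Fintype.card R) := by
  classical
  set G := ∑ u, ψ (α * u ^ 2 + β * u)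
  have hG : G * (starRingEnd ℂ) G = Fintype.card R :=
    calc G * (starRingEnd ℂ) G
        = ∑ v, ∑ h, ψ (α * h ^ 2 + β * h) * ψ (v * (2 * α * h)) := by
          simp only [G, map_sum, ← AddChar.map_neg_eq_conj]
          rw [sum_mul_sum, sum_comm]
          refine sum_congr rfl fun v _ =>
            (Fintype.sum_equiv (Equiv.addRight v) _ _ fun h => ?_).symm
          simp only [Equiv.coe_addRight, ← AddChar.map_add_eq_mul]
          ring_nf
      _ = ∑ h, ψ (α * h ^ 2 + β * h) * ∑ v, ψ (v * (2 * α * h)) := by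
          rw [sum_comm]
          simp_rw [mul_sum]
      _ = Fintype.card R := by simp [AddChar.sum_mulShift _ hψ, hα.mul_right_eq_zero]
  have hsq : ‖G‖ ^ 2 = Fintype.card R := by
    exact_mod_cast (Complex.mul_conj' G).symm.trans hG
  rw [← hsq, Real.sqrt_sq (norm_nonneg G)]

lemma sum_eZMod_linear_quadratic_eq_zero {d e N : ℕ} [NeZero d] [NeZero e] [NeZero N]
    (hN : d * e = N) (D : ZMod N) (α : ZMod d) (hD : (ZMod.cast D : ZMod e) ≠ 0) :
    ∑ y : ZMod N, eZMod N (D * y) * eZMod d (α * ZMod.cast y ^ 2) = 0 := by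
  set S := ∑ y : ZMod N, eZMod N (D * y) * eZMod d (α * ZMod.cast y ^ 2)
  -- the shift `y ↦ y + d` fixes `y mod d` and multiplies the summand by `e_e(D)`
  have hshift : eZMod e (ZMod.cast D) * S = S := by
    rw [mul_sum]
    refine Fintype.sum_equiv (Equiv.addRight (d : ZMod N)) _ _ fun y => ?_
    rw [Equiv.coe_addRight, ZMod.cast_add (Dvd.intro e hN), ZMod.cast_natCast (Dvd.intro e hN),
      ZMod.natCast_self, add_zero, mul_add, eZMod_add, mul_comm D (d : ZMod N),
      eZMod_natCast_mul hN]
    ring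
  have hne : eZMod e (ZMod.cast D) ≠ 1 := by
    rwa [Ne, eZMod_eq_stdAddChar, ← (ZMod.stdAddChar (N := e)).map_zero_eq_one,
      ZMod.injective_stdAddChar.eq_iff]
  have : (1 - eZMod e (ZMod.cast D)) * S = 0 := by linear_combination -hshift
  exact (mul_eq_zero.1 this).resolve_left (sub_ne_zero.2 hne.symm)

lemma norm_sum_eZMod_linear_quadratic {d e N : ℕ} [NeZero d] [NeZero e] [NeZero N]
    (hN : d * e = N) (D : ZMod N) {α : ZMod d} (hα : IsUnit (2 * α))
    (hD : (ZMod.cast D : ZMod e) = 0) :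
    ‖∑ y : ZMod N, eZMod N (D * y) * eZMod d (α * ZMod.cast y ^ 2)‖ = e * √d := by
  obtain ⟨j, hj⟩ : e ∣ D.val := by rwa [ZMod.cast_eq_val, ZMod.natCast_eq_zero_iff] at hD
  have hdN : d ∣ N := Dvd.intro e hN
  have hterm (y : ZMod N) : eZMod N (D * y) * eZMod d (α * ZMod.cast y ^ 2) =
      eZMod d (α * ZMod.cast y ^ 2 + j * ZMod.cast y) := by
    rw [← ZMod.natCast_zmod_val D, hj, Nat.cast_mul, mul_assoc,
      eZMod_natCast_mul ((mul_comm e d).trans hN), ZMod.cast_mul hdN, ZMod.cast_natCast hdN,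
      eZMod_add, mul_comm]
  simp_rw [hterm]
  rw [sum_comp_cast hdN (fun u => eZMod d (α * u ^ 2 + j * u)), ← hN,
    Nat.mul_div_cancel_left _ (Nat.pos_of_neZero d), nsmul_eq_mul, norm_mul, Complex.norm_natCast]
  simp_rw [eZMod_eq_stdAddChar]
  rw [norm_sum_addChar_quadratic (ZMod.isPrimitive_stdAddChar d) hα, ZMod.card]

open Polynomial in
lemma card_quadratic_roots_le_two {R K : Type*} [CommRing R] [Fintype R] [DecidableEq R]
    [Field K] (π : R →+* K) [IsLocalHom π] {A T B : R}
    (hdisc : π T ^ 2 + 4 * π A * π B ≠ 0) :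
    #{z | A * z ^ 2 + T * z - B = 0} ≤ 2 := by
  classical
  set S : Finset R := {z | A * z ^ 2 + T * z - B = 0}
  have hroot {z : R} (hz : z ∈ S) : π A * π z ^ 2 + π T * π z - π B = 0 := by
    simpa using congrArg π (mem_filter.1 hz).2
  have hinj : Set.InjOn π S := by
    intro z hz z' hz' hzz
    have hfac : (z - z') * (A * (z + z') + T) = 0 := by
      linear_combination (mem_filter.1 hz).2 - (mem_filter.1 hz').2
    have hsq : π (A * (z + z') + T) ^ 2 = π T ^ 2 + 4 * π A * π B := by
      simp only [map_add, map_mul, ← hzz]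
      linear_combination 4 * π A * hroot hz
    have hunit : IsUnit (A * (z + z') + T) := isUnit_of_map_unit π _
      (Ne.isUnit fun h => hdisc (by rw [← hsq, h, zero_pow two_ne_zero]))
    exact sub_eq_zero.1 ((hunit.mul_left_eq_zero).1 hfac)
  set f : K[X] := C (π A) * X ^ 2 + C (π T) * X + C (-π B)
  have hf : f ≠ 0 := by
    intro hf
    have h1 : π T = 0 := by simpa [f] using congrArg (coeff · 1) hf
    have h2 : π A = 0 := by simpa [f] using congrArg (coeff · 2) hf
    exact hdisc (by simp [h1, h2])
  have hsub : S.image π ⊆ f.roots.toFinset := by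
    intro w hw
    obtain ⟨z, hz, rfl⟩ := mem_image.1 hw
    rw [Multiset.mem_toFinset, mem_roots hf]
    simp only [f, IsRoot, eval_add, eval_mul, eval_pow, eval_C, eval_X]
    linear_combination hroot hz
  calc #S = #(S.image π) := (card_image_of_injOn hinj).symm
    _ ≤ f.roots.toFinset.card := card_le_card hsub
    _ ≤ Multiset.card f.roots := Multiset.toFinset_card_le _
    _ ≤ f.natDegree := card_roots' f
    _ ≤ 2 := natDegree_quadratic_le

lemma card_mul_norm_sum_le {G Y : Type*} [Group G] [Fintype G] [Fintype Y] (f : G → ℂ)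
    (g : Y → G) (s : Finset G) (C : ℝ) (hs : ∀ x ∉ s, ∑ y, f (x * g y) = 0)
    (hC : ∀ x ∈ s, ‖∑ y, f (x * g y)‖ ≤ C) :
    Fintype.card Y * ‖∑ x, f x‖ ≤ #s * C := by
  have haverage : (Fintype.card Y : ℂ) * ∑ x, f x = ∑ x ∈ s, ∑ y, f (x * g y) := by
    rw [sum_subset (subset_univ s) fun x _ hx => hs x hx, sum_comm, ← nsmul_eq_mul,
      ← card_univ, ← sum_const]
    exact sum_congr rfl fun y _ =>
      (Fintype.sum_equiv (Equiv.mulRight (g y)) (fun x => f (x * g y)) f fun _ => rfl).symm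
  calc Fintype.card Y * ‖∑ x, f x‖ = ‖∑ x ∈ s, ∑ y, f (x * g y)‖ := by
        rw [← haverage, norm_mul, Complex.norm_natCast]
    _ ≤ ∑ x ∈ s, ‖∑ y, f (x * g y)‖ := norm_sum_le _ _
    _ ≤ #s * C := by simpa using sum_le_sum hC

lemma natCast_mul_eq_of_natCast_eq {m n N a b : ℕ} (hN : N ∣ m * n) (h : (a : ZMod n) = b) :
    (m : ZMod N) * a = m * b := by
  simp only [← Nat.cast_mul, ZMod.natCast_eq_natCast_iff] at h ⊢
  exact (h.mul_left' m).of_dvd hN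

lemma cast_cast_of_dvd {m n N : ℕ} [NeZero N] (h : n ∣ m) (z : ZMod N) :
    (ZMod.cast (ZMod.cast z : ZMod m) : ZMod n) = ZMod.cast z := by
  rw [ZMod.cast_eq_val z, ZMod.cast_natCast h, ZMod.cast_eq_val]

lemma cast_natCast_val {m n N : ℕ} [NeZero m] (h : n ∣ N) (y : ZMod m) :
    (ZMod.cast (y.val : ZMod N) : ZMod n) = ZMod.cast y := by
  rw [ZMod.cast_natCast h, ZMod.natCast_val]

lemma pow_mul_sqrt_pow_sub_eq_sqrt_pow {p k l : ℕ} (h2l : 2 * l ≤ k) :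
    ((p ^ l : ℕ) : ℝ) * √((p ^ (k - 2 * l) : ℕ) : ℝ) = √((p : ℝ) ^ k) := by
  rw [← Real.sqrt_sq (Nat.cast_nonneg (p ^ l)), ← Real.sqrt_mul (by positivity)]
  push_cast
  rw [← pow_mul, ← pow_add, Nat.mul_comm, Nat.add_sub_cancel' h2l]

/-- The truncation of `exp (p^l y) = 1 + p^l y + p^{2l} y²/2 + ⋯`, exact modulo `p^k` once
`k ≤ 3l`. -/
def truncExp (p k l : ℕ) (y : ZMod (p ^ (k - l))) : ZMod (p ^ k) :=
  1 + (p : ZMod (p ^ k)) ^ l * (y.val : ZMod (p ^ k)) +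
    (p : ZMod (p ^ k)) ^ (2 * l) * ((y ^ 2 * (2 : ZMod (p ^ (k - l)))⁻¹).val : ZMod (p ^ k))

noncomputable def kloosTerm (q : ℕ) (a b : ZMod q) (χ : MulChar (ZMod q) ℂ) (x : (ZMod q)ˣ) :
    ℂ :=
  eZMod q (a * x + b * (x⁻¹ : (ZMod q)ˣ)) * χ x

lemma norm_kloosTerm (q : ℕ) [NeZero q] (a b : ZMod q) (χ : MulChar (ZMod q) ℂ)
    (x : (ZMod q)ˣ) : ‖kloosTerm q a b χ x‖ = 1 := by
  rw [kloosTerm, norm_mul, norm_eZMod, DirichletCharacter.unit_norm_eq_one, one_mul]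

def kloosLinCoeff (p k l : ℕ) (a b : ZMod (p ^ k)) (t : ZMod (p ^ (k - l)))
    (x : (ZMod (p ^ k))ˣ) : ZMod (p ^ (k - l)) :=
  ZMod.cast (a * (x : ZMod (p ^ k))) -
    ZMod.cast (b * ((x⁻¹ : (ZMod (p ^ k))ˣ) : ZMod (p ^ k))) + t

def kloosQuadCoeff (p k l : ℕ) (a b : ZMod (p ^ k)) (x : (ZMod (p ^ k))ˣ) :
    ZMod (p ^ (k - 2 * l)) :=
  (ZMod.cast (a * (x : ZMod (p ^ k))) +
    ZMod.cast (b * ((x⁻¹ : (ZMod (p ^ k))ˣ) : ZMod (p ^ k)))) * ZMod.cast (2⁻¹ : ZMod (p ^ (k - l)))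

section PrimePower

variable {p k l : ℕ}

lemma truncExp_zero : truncExp p k l 0 = 1 := by
  simp [truncExp]

variable [Fact p.Prime]

lemma isLocalHom_castHom_prime_pow (hk : k ≠ 0) :
    IsLocalHom (ZMod.castHom (dvd_pow_self p hk) (ZMod p)) := by
  refine ⟨fun z hz => ?_⟩
  rw [← ZMod.natCast_zmod_val z,
    ZMod.isUnit_natCast_iff_not_dvd_pow Fact.out (Nat.pos_of_ne_zero hk),
    ← ZMod.natCast_eq_zero_iff, ← ZMod.cast_eq_val, ← ZMod.castHom_apply]
  exact hz.ne_zero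

lemma two_mul_inv_two_prime_pow (hp : p ≠ 2) (n : ℕ) : (2 : ZMod (p ^ n)) * 2⁻¹ = 1 := by
  refine ZMod.mul_inv_of_unit _ ?_
  exact_mod_cast (ZMod.isUnit_iff_coprime 2 _).2
    (((Nat.coprime_primes Nat.prime_two Fact.out).2 hp.symm).pow_right _)

lemma truncExp_add (hp : p ≠ 2) (h3l : k ≤ 3 * l) (y y' : ZMod (p ^ (k - l))) :
    truncExp p k l (y + y') = truncExp p k l y * truncExp p k l y' := by
  have hdvd (j : ℕ) (hj : k ≤ j + (k - l)) : p ^ k ∣ p ^ j * p ^ (k - l) := by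
    rw [← pow_add]; exact pow_dvd_pow p hj
  set w : ZMod (p ^ (k - l)) → ZMod (p ^ k) := fun z => (z ^ 2 * 2⁻¹ : ZMod (p ^ (k - l))).val
  have hlin : ((p ^ l : ℕ) : ZMod (p ^ k)) * ((y + y').val : ZMod (p ^ k)) =
      (p ^ l : ℕ) * (y.val + y'.val : ℕ) := by
    refine natCast_mul_eq_of_natCast_eq (hdvd l (by omega)) ?_
    push_cast
    simp only [ZMod.natCast_zmod_val]
  have hquad : ((p ^ (2 * l) : ℕ) : ZMod (p ^ k)) * w (y + y') =
      (p ^ (2 * l) : ℕ) *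
        ((y ^ 2 * 2⁻¹).val + (y' ^ 2 * 2⁻¹).val + y.val * y'.val : ℕ) := by
    refine natCast_mul_eq_of_natCast_eq (hdvd (2 * l) (by omega)) ?_
    push_cast
    simp only [ZMod.natCast_zmod_val]
    linear_combination (y * y') * two_mul_inv_two_prime_pow hp (k - l)
  have hcube : (p : ZMod (p ^ k)) ^ (3 * l) = 0 := by
    rw [← Nat.cast_pow, ZMod.natCast_eq_zero_iff]
    exact pow_dvd_pow p h3l
  push_cast at hlin hquad
  simp only [truncExp]
  linear_combination hlin + hquad - ((y.val : ZMod (p ^ k)) * w y' + w y * y'.val +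
    (p : ZMod (p ^ k)) ^ l * w y * w y') * hcube

lemma truncExp_mul_truncExp_neg (hp : p ≠ 2) (h3l : k ≤ 3 * l) (y : ZMod (p ^ (k - l))) :
    truncExp p k l y * truncExp p k l (-y) = 1 := by
  rw [← truncExp_add hp h3l, add_neg_cancel, truncExp_zero]

def truncExpUnit (hp : p ≠ 2) (h3l : k ≤ 3 * l) (y : ZMod (p ^ (k - l))) : (ZMod (p ^ k))ˣ :=
  Units.mkOfMulEqOne _ _ (truncExp_mul_truncExp_neg hp h3l y)

lemma val_truncExpUnit (hp : p ≠ 2) (h3l : k ≤ 3 * l) (y : ZMod (p ^ (k - l))) :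
    (truncExpUnit hp h3l y : ZMod (p ^ k)) = truncExp p k l y := rfl

lemma val_truncExpUnit_inv (hp : p ≠ 2) (h3l : k ≤ 3 * l) (y : ZMod (p ^ (k - l))) :
    ((truncExpUnit hp h3l y)⁻¹ : (ZMod (p ^ k))ˣ) = truncExp p k l (-y) := rfl

lemma eZMod_mul_truncExp (h2l : 2 * l ≤ k) (Z : ZMod (p ^ k)) (y : ZMod (p ^ (k - l))) :
    eZMod (p ^ k) (Z * truncExp p k l y) =
      eZMod (p ^ k) Z * eZMod (p ^ (k - l)) (ZMod.cast Z * y) *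
        eZMod (p ^ (k - 2 * l))
          (ZMod.cast Z * ZMod.cast (y ^ 2 * (2 : ZMod (p ^ (k - l)))⁻¹)) := by
  have hsplit (j : ℕ) (hj : j ≤ k) : p ^ j * p ^ (k - j) = p ^ k := by
    rw [← pow_add, Nat.add_sub_cancel' hj]
  have hl := Dvd.intro_left _ (hsplit l (by omega))
  have h2l' := Dvd.intro_left _ (hsplit (2 * l) h2l)
  have hexpand : Z * truncExp p k l y = Z + ((p ^ l : ℕ) : ZMod (p ^ k)) * (Z * y.val) +
      ((p ^ (2 * l) : ℕ) : ZMod (p ^ k)) * (Z * (y ^ 2 * (2 : ZMod (p ^ (k - l)))⁻¹).val) := by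
    simp only [truncExp]; push_cast; ring
  rw [hexpand, eZMod_add, eZMod_add, eZMod_natCast_mul (hsplit l (by omega)),
    eZMod_natCast_mul (hsplit (2 * l) h2l), ZMod.cast_mul hl, ZMod.cast_mul h2l',
    cast_natCast_val hl, cast_natCast_val h2l', ZMod.cast_id]

lemma kloosTerm_mul_truncExpUnit (hp : p ≠ 2) (h2l : 2 * l ≤ k) (h3l : k ≤ 3 * l)
    {χ : MulChar (ZMod (p ^ k)) ℂ} {t : ZMod (p ^ (k - l))}
    (hχ : ∀ y, χ (truncExp p k l y) = eZMod (p ^ (k - l)) (t * y))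
    (a b : ZMod (p ^ k)) (x : (ZMod (p ^ k))ˣ) (y : ZMod (p ^ (k - l))) :
    kloosTerm (p ^ k) a b χ (x * truncExpUnit hp h3l y) = kloosTerm (p ^ k) a b χ x *
      (eZMod (p ^ (k - l)) (kloosLinCoeff p k l a b t x * y) *
        eZMod (p ^ (k - 2 * l)) (kloosQuadCoeff p k l a b x * ZMod.cast y ^ 2)) := by
  set X : ZMod (p ^ k) := (x : ZMod (p ^ k))
  set X' : ZMod (p ^ k) := ((x⁻¹ : (ZMod (p ^ k))ˣ) : ZMod (p ^ k))
  have hinv : (((x * truncExpUnit hp h3l y)⁻¹ : (ZMod (p ^ k))ˣ) : ZMod (p ^ k)) =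
      X' * truncExp p k l (-y) := by
    rw [mul_inv_rev, mul_comm, Units.val_mul, val_truncExpUnit_inv]
  have hdvd : p ^ (k - 2 * l) ∣ p ^ (k - l) := pow_dvd_pow p (by omega)
  set s : ZMod (p ^ (k - 2 * l)) := ZMod.cast (2⁻¹ : ZMod (p ^ (k - l))) * ZMod.cast y ^ 2
  have hsq : (ZMod.cast (y ^ 2 * (2⁻¹ : ZMod (p ^ (k - l)))) : ZMod (p ^ (k - 2 * l))) = s := by
    rw [ZMod.cast_mul hdvd, ZMod.cast_pow hdvd]
    exact mul_comm _ _
  have hlin : kloosLinCoeff p k l a b t x * y =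
      ZMod.cast (a * X) * y + ZMod.cast (b * X') * -y + t * y := by
    rw [kloosLinCoeff]; ring
  have hquad : kloosQuadCoeff p k l a b x * ZMod.cast y ^ 2 =
      ZMod.cast (a * X) * s + ZMod.cast (b * X') * s := by
    rw [kloosQuadCoeff]; ring
  rw [kloosTerm, kloosTerm, Units.val_mul, val_truncExpUnit, hinv, ← mul_assoc, ← mul_assoc,
    eZMod_add, map_mul, hχ, eZMod_mul_truncExp h2l, eZMod_mul_truncExp h2l, neg_sq, hsq, hlin,
    hquad, eZMod_add, eZMod_add, eZMod_add, eZMod_add]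
  ring

lemma sum_kloosTerm_mul_truncExpUnit (hp : p ≠ 2) (h2l : 2 * l ≤ k) (h3l : k ≤ 3 * l)
    {χ : MulChar (ZMod (p ^ k)) ℂ} {t : ZMod (p ^ (k - l))}
    (hχ : ∀ y, χ (truncExp p k l y) = eZMod (p ^ (k - l)) (t * y))
    (a b : ZMod (p ^ k)) (x : (ZMod (p ^ k))ˣ) :
    ∑ y, kloosTerm (p ^ k) a b χ (x * truncExpUnit hp h3l y) = kloosTerm (p ^ k) a b χ x *
      ∑ y : ZMod (p ^ (k - l)), eZMod (p ^ (k - l)) (kloosLinCoeff p k l a b t x * y) *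
        eZMod (p ^ (k - 2 * l)) (kloosQuadCoeff p k l a b x * ZMod.cast y ^ 2) := by
  simp_rw [kloosTerm_mul_truncExpUnit hp h2l h3l hχ a b x, mul_sum]

lemma quadratic_eq_zero_of_cast_kloosLinCoeff_eq_zero (h2l : 2 * l ≤ k) (a b : ZMod (p ^ k))
    (t : ZMod (p ^ (k - l))) (x : (ZMod (p ^ k))ˣ)
    (h : (ZMod.cast (kloosLinCoeff p k l a b t x) : ZMod (p ^ l)) = 0) :
    (ZMod.cast a : ZMod (p ^ l)) * ZMod.cast (x : ZMod (p ^ k)) ^ 2 +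
      ZMod.cast t * ZMod.cast (x : ZMod (p ^ k)) - ZMod.cast b = 0 := by
  have hd : p ^ l ∣ p ^ (k - l) := pow_dvd_pow p (by omega)
  have hdk : p ^ l ∣ p ^ k := pow_dvd_pow p (by omega)
  rw [kloosLinCoeff, ZMod.cast_add hd, ZMod.cast_sub hd, cast_cast_of_dvd hd, cast_cast_of_dvd hd,
    ZMod.cast_mul hdk, ZMod.cast_mul hdk] at h
  have hinv : (ZMod.cast (x : ZMod (p ^ k)) : ZMod (p ^ l)) *
      ZMod.cast ((x⁻¹ : (ZMod (p ^ k))ˣ) : ZMod (p ^ k)) = 1 := by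
    rw [← ZMod.cast_mul hdk, ← Units.val_mul, mul_inv_cancel, Units.val_one, ZMod.cast_one hdk]
  linear_combination ZMod.cast (x : ZMod (p ^ k)) * h + ZMod.cast b * hinv

lemma isUnit_two_mul_kloosQuadCoeff (hp : p ≠ 2) (hl : l ≠ 0) (h2l : 2 * l ≤ k)
    {a b : ZMod (p ^ k)} {t : ZMod (p ^ (k - l))}
    (hdisc : (ZMod.cast t : ZMod p) ^ 2 + 4 * ZMod.cast a * ZMod.cast b ≠ 0)
    (x : (ZMod (p ^ k))ˣ) (h : (ZMod.cast (kloosLinCoeff p k l a b t x) : ZMod (p ^ l)) = 0) :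
    IsUnit (2 * kloosQuadCoeff p k l a b x) := by
  have hpk : p ∣ p ^ k := dvd_pow_self p (by omega)
  have hpkl : p ∣ p ^ (k - l) := dvd_pow_self p (by omega)
  set X : ZMod (p ^ k) := (x : ZMod (p ^ k))
  set X' : ZMod (p ^ k) := ((x⁻¹ : (ZMod (p ^ k))ˣ) : ZMod (p ^ k))
  have hmod_p := cast_cast_of_dvd (dvd_pow_self p hl) (kloosLinCoeff p k l a b t x)
  rw [h, ZMod.cast_zero, kloosLinCoeff, ZMod.cast_add hpkl, ZMod.cast_sub hpkl,
    cast_cast_of_dvd hpkl, cast_cast_of_dvd hpkl, ZMod.cast_mul hpk, ZMod.cast_mul hpk] at hmod_p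
  have hinv : (ZMod.cast X : ZMod p) * ZMod.cast X' = 1 := by
    rw [← ZMod.cast_mul hpk, ← Units.val_mul, mul_inv_cancel, Units.val_one, ZMod.cast_one hpk]
  have := isLocalHom_castHom_prime_pow (p := p) (k := k) (by omega)
  -- modulo `p`, `(aX + bX')² = (aX - bX')² + 4ab XX' = t² + 4ab`
  have hunit : IsUnit (a * X + b * X') := by
    refine isUnit_of_map_unit (ZMod.castHom hpk (ZMod p)) _ (Ne.isUnit fun h0 => hdisc ?_)
    rw [ZMod.castHom_apply, ZMod.cast_add hpk, ZMod.cast_mul hpk, ZMod.cast_mul hpk] at h0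
    set u := (ZMod.cast a : ZMod p) * ZMod.cast X
    set v := (ZMod.cast b : ZMod p) * ZMod.cast X'
    linear_combination (u - v - ZMod.cast t) * hmod_p + (u + v) * h0 -
      4 * (ZMod.cast a : ZMod p) * ZMod.cast b * hinv
  have hd : p ^ (k - 2 * l) ∣ p ^ (k - l) := pow_dvd_pow p (by omega)
  have hdk : p ^ (k - 2 * l) ∣ p ^ k := pow_dvd_pow p (by omega)
  have htwo := congrArg (ZMod.castHom hd (ZMod (p ^ (k - 2 * l))))
    (two_mul_inv_two_prime_pow hp (k - l))
  rw [map_mul, map_ofNat, map_one, ZMod.castHom_apply] at htwo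
  rw [kloosQuadCoeff, mul_left_comm, htwo, mul_one, ← ZMod.cast_add hdk,
    ← ZMod.castHom_apply (h := hdk)]
  exact hunit.map _

lemma sum_kloosTerm_mul_truncExpUnit_eq_zero (hp : p ≠ 2) (h2l : 2 * l ≤ k) (h3l : k ≤ 3 * l)
    {χ : MulChar (ZMod (p ^ k)) ℂ} {t : ZMod (p ^ (k - l))}
    (hχ : ∀ y, χ (truncExp p k l y) = eZMod (p ^ (k - l)) (t * y))
    (a b : ZMod (p ^ k)) (x : (ZMod (p ^ k))ˣ)
    (hx : (ZMod.cast a : ZMod (p ^ l)) * ZMod.cast (x : ZMod (p ^ k)) ^ 2 +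
      ZMod.cast t * ZMod.cast (x : ZMod (p ^ k)) - ZMod.cast b ≠ 0) :
    ∑ y, kloosTerm (p ^ k) a b χ (x * truncExpUnit hp h3l y) = 0 := by
  have hN : p ^ (k - 2 * l) * p ^ l = p ^ (k - l) := by rw [← pow_add]; congr 1; omega
  rw [sum_kloosTerm_mul_truncExpUnit hp h2l h3l hχ, sum_eZMod_linear_quadratic_eq_zero hN,
    mul_zero]
  exact fun h => hx (quadratic_eq_zero_of_cast_kloosLinCoeff_eq_zero h2l a b t x h)

lemma norm_sum_kloosTerm_mul_truncExpUnit_le (hp : p ≠ 2) (hl : l ≠ 0) (h2l : 2 * l ≤ k)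
    (h3l : k ≤ 3 * l) {χ : MulChar (ZMod (p ^ k)) ℂ} {t : ZMod (p ^ (k - l))}
    (hχ : ∀ y, χ (truncExp p k l y) = eZMod (p ^ (k - l)) (t * y)) {a b : ZMod (p ^ k)}
    (hdisc : (ZMod.cast t : ZMod p) ^ 2 + 4 * ZMod.cast a * ZMod.cast b ≠ 0)
    (x : (ZMod (p ^ k))ˣ) :
    ‖∑ y, kloosTerm (p ^ k) a b χ (x * truncExpUnit hp h3l y)‖ ≤ √((p : ℝ) ^ k) := by
  have hN : p ^ (k - 2 * l) * p ^ l = p ^ (k - l) := by rw [← pow_add]; congr 1; omega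
  rw [sum_kloosTerm_mul_truncExpUnit hp h2l h3l hχ, norm_mul, norm_kloosTerm, one_mul]
  by_cases hD : (ZMod.cast (kloosLinCoeff p k l a b t x) : ZMod (p ^ l)) = 0
  · rw [norm_sum_eZMod_linear_quadratic hN _
      (isUnit_two_mul_kloosQuadCoeff hp hl h2l hdisc x hD) hD, pow_mul_sqrt_pow_sub_eq_sqrt_pow h2l]
  · rw [sum_eZMod_linear_quadratic_eq_zero hN _ _ hD, norm_zero]
    positivity

theorem norm_kloos_le_of_truncExp (hp : p ≠ 2) (hl : l ≠ 0) (h2l : 2 * l ≤ k)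
    (h3l : k ≤ 3 * l) {χ : MulChar (ZMod (p ^ k)) ℂ} {t : ZMod (p ^ (k - l))}
    (hχ : ∀ y, χ (truncExp p k l y) = eZMod (p ^ (k - l)) (t * y)) (a b : ZMod (p ^ k))
    (hdisc : (ZMod.cast t : ZMod p) ^ 2 + 4 * ZMod.cast a * ZMod.cast b ≠ 0) :
    ‖Kloos (p ^ k) a b χ‖ ≤ 2 * √((p : ℝ) ^ k) := by
  have hpl : p ∣ p ^ l := dvd_pow_self p hl
  set R : Finset (ZMod (p ^ l)) := {z | ZMod.cast a * z ^ 2 + ZMod.cast t * z - ZMod.cast b = 0}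
  set s : Finset (ZMod (p ^ k))ˣ := {x | ZMod.cast (x : ZMod (p ^ k)) ∈ R}
  have hR : #R ≤ 2 := by
    have := isLocalHom_castHom_prime_pow (p := p) hl
    refine card_quadratic_roots_le_two (ZMod.castHom hpl (ZMod p)) ?_
    simpa only [ZMod.castHom_apply, cast_cast_of_dvd hpl] using hdisc
  have hs : (#s : ℝ) ≤ p ^ (k - l) * 2 := by
    have := card_units_filter_cast_mem_le (pow_dvd_pow p (by omega : l ≤ k)) R
    rw [Nat.pow_div (by omega) (Fact.out : p.Prime).pos] at this
    exact_mod_cast this.trans (Nat.mul_le_mul_left _ hR)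
  have key := card_mul_norm_sum_le (kloosTerm (p ^ k) a b χ) (truncExpUnit hp h3l) s
    √((p : ℝ) ^ k)
    (fun x hx => sum_kloosTerm_mul_truncExpUnit_eq_zero hp h2l h3l hχ a b x
      (by simpa [s, R] using hx))
    (fun x _ => norm_sum_kloosTerm_mul_truncExpUnit_le hp hl h2l h3l hχ hdisc x)
  rw [ZMod.card] at key
  refine le_of_mul_le_mul_left (key.trans ?_) (Nat.cast_pos.2 (pow_pos (Fact.out : p.Prime).pos _))
  calc (#s : ℝ) * √((p : ℝ) ^ k) ≤ (p ^ (k - l) * 2) * √((p : ℝ) ^ k) := by gcongr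
    _ = (p ^ (k - l) : ℕ) * (2 * √((p : ℝ) ^ k)) := by push_cast; ring

end PrimePower

/-- For `q = p^k` (`p` an odd prime, `k ≥ 2`) and a character `χ` of `(ℤ/qℤ)^*` whose
parameter `t_χ` satisfies `t_χ² ≢ -4ab (mod p)`, one has `|K_q(a,b,χ)| ≤ 2√q`.
Here `l = ⌊k/2⌋` and the parameter `t = t_χ ∈ ℤ/p^{k-l}ℤ` is characterized by
`χ(1 + p^l x) = e_{p^l}(tx)` for `k` even and by
`χ(1 + p^l x + p^{2l}(x²/2)) = e_{p^{l+1}}(tx)` for `k` odd. -/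
theorem kloos_bound_of_param
    (p k : ℕ) [Fact p.Prime] (hodd : p ≠ 2) (hk : 2 ≤ k)
    (χ : MulChar (ZMod (p ^ k)) ℂ) (t : ZMod (p ^ (k - k / 2)))
    (hte : k % 2 = 0 → ∀ x : ZMod (p ^ (k - k / 2)),
      χ (1 + (p : ZMod (p ^ k)) ^ (k / 2) * (x.val : ZMod (p ^ k))) =
        eZMod (p ^ (k - k / 2)) (t * x))
    (hto : k % 2 = 1 → ∀ x : ZMod (p ^ (k - k / 2)),
      χ (1 + (p : ZMod (p ^ k)) ^ (k / 2) * (x.val : ZMod (p ^ k)) +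
          (p : ZMod (p ^ k)) ^ (2 * (k / 2)) *
            (((x ^ 2 * (2 : ZMod (p ^ (k - k / 2)))⁻¹).val : ZMod (p ^ k)))) =
        eZMod (p ^ (k - k / 2)) (t * x))
    (a b : (ZMod (p ^ k))ˣ)
    (htab : ((t.val : ZMod p)) ^ 2 ≠
      -4 * (((a : ZMod (p ^ k)).val : ZMod p)) * (((b : ZMod (p ^ k)).val : ZMod p))) :
    ‖Kloos (p ^ k) (a : ZMod (p ^ k)) (b : ZMod (p ^ k)) χ‖ ≤
      2 * Real.sqrt (p ^ k) := by
  have hχ (y : ZMod (p ^ (k - k / 2))) :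
      χ (truncExp p k (k / 2) y) = eZMod (p ^ (k - k / 2)) (t * y) := by
    rcases Nat.mod_two_eq_zero_or_one k with hpar | hpar
    · have hvanish : (p : ZMod (p ^ k)) ^ (2 * (k / 2)) = 0 := by
        rw [← Nat.cast_pow, Nat.two_mul_div_two_of_even (Nat.even_iff.2 hpar), ZMod.natCast_self]
      rw [truncExp, hvanish, zero_mul, add_zero, hte hpar]
    · exact hto hpar y
  have hdisc : (ZMod.cast t : ZMod p) ^ 2 +
      4 * ZMod.cast (a : ZMod (p ^ k)) * ZMod.cast (b : ZMod (p ^ k)) ≠ 0 := by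
    simp only [← ZMod.natCast_val]
    exact fun h => htab (by linear_combination h)
  exact norm_kloos_le_of_truncExp hodd (by omega) (by omega) (by omega) hχ a b hdisc
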